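/- arXiv:2601.09946 — 6 statements merged into one kernel-verified Lean document; each statement's English description precedes it below -/
import Mathlib

section
/- Let ε ≥ 0 and let t_i < t_i' ≤ t_j < t_j' be real numbers with associated positive real values z_i, z_i', z_j, z_j' such that for every pair (u, v) among these four points, |ln z_u − ln z_v| ≤ ε·|t_u − t_v|. Let ẑ_a be the one-dimensional log-convex interpolant of (z_i, z_i') on [t_i, t_i'] evaluated at t_a ∈ [t_i, t_i'], and let ẑ_b be the one-dimensional log-convex interpolant of (z_j, z_j') on [t_j, t_j'] evaluated at t_b ∈ [t_j, t_j']. Then |ln ẑ_a − ln ẑ_b| ≤ ε·|t_a − t_b|. -/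
set_option maxHeartbeats 1600000


/-- Across-interval validity of one-dimensional log-convex interpolation
(Proposition 2). -/
theorem across_interval_validity
    (ε ti ti' tj tj' zi zi' zj zj' : ℝ) (hε : 0 ≤ ε)
    (h1 : ti < ti') (h2 : ti' ≤ tj) (h3 : tj < tj')
    (hzi : 0 < zi) (hzi' : 0 < zi') (hzj : 0 < zj) (hzj' : 0 < zj')
    (hpair : ∀ u v : ℝ × ℝ,
      u ∈ ([(ti, zi), (ti', zi'), (tj, zj), (tj', zj')] : List (ℝ × ℝ)) →
      v ∈ ([(ti, zi), (ti', zi'), (tj, zj), (tj', zj')] : List (ℝ × ℝ)) →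
      |Real.log u.2 - Real.log v.2| ≤ ε * |u.1 - v.1|)
    (ta tb : ℝ) (hta : ta ∈ Set.Icc ti ti') (htb : tb ∈ Set.Icc tj tj')
    (za zb : ℝ)
    (hza : za = Real.exp (((ti' - ta) / (ti' - ti)) * Real.log zi +
      (1 - (ti' - ta) / (ti' - ti)) * Real.log zi'))
    (hzb : zb = Real.exp (((tj' - tb) / (tj' - tj)) * Real.log zj +
      (1 - (tj' - tb) / (tj' - tj)) * Real.log zj')) :
    |Real.log za - Real.log zb| ≤ ε * |ta - tb| := by
  obtain ⟨hta1, hta2⟩ := hta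
  obtain ⟨htb1, htb2⟩ := htb
  set La := (ti' - ta) / (ti' - ti) with hLa
  set Lb := (tj' - tb) / (tj' - tj) with hLb
  have hia : (0:ℝ) < ti' - ti := by linarith
  have hjb : (0:ℝ) < tj' - tj := by linarith
  have hLa0 : 0 ≤ La := div_nonneg (by linarith) hia.le
  have hLa1 : La ≤ 1 := by rw [hLa, div_le_one hia]; linarith
  have hLb0 : 0 ≤ Lb := div_nonneg (by linarith) hjb.le
  have hLb1 : Lb ≤ 1 := by rw [hLb, div_le_one hjb]; linarith
  have hconva : La * ti + (1 - La) * ti' = ta := by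
    rw [hLa, div_mul_eq_mul_div, one_sub_div hia.ne', div_mul_eq_mul_div, ← add_div, div_eq_iff hia.ne']; ring
  have hconvb : Lb * tj + (1 - Lb) * tj' = tb := by
    rw [hLb, div_mul_eq_mul_div, one_sub_div hjb.ne', div_mul_eq_mul_div, ← add_div, div_eq_iff hjb.ne']; ring
  have hmi : ((ti, zi) : ℝ × ℝ) ∈ ([(ti, zi), (ti', zi'), (tj, zj), (tj', zj')] : List (ℝ × ℝ)) := by simp
  have hmi' : ((ti', zi') : ℝ × ℝ) ∈ ([(ti, zi), (ti', zi'), (tj, zj), (tj', zj')] : List (ℝ × ℝ)) := by simp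
  have hmj : ((tj, zj) : ℝ × ℝ) ∈ ([(ti, zi), (ti', zi'), (tj, zj), (tj', zj')] : List (ℝ × ℝ)) := by simp
  have hmj' : ((tj', zj') : ℝ × ℝ) ∈ ([(ti, zi), (ti', zi'), (tj, zj), (tj', zj')] : List (ℝ × ℝ)) := by simp
  have e1 : |Real.log zi - Real.log zj| ≤ ε * (tj - ti) := by
    have := hpair _ _ hmi hmj
    simpa [abs_of_nonpos (by linarith : ti - tj ≤ 0)] using this
  have e2 : |Real.log zi - Real.log zj'| ≤ ε * (tj' - ti) := by
    have := hpair _ _ hmi hmj'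
    simpa [abs_of_nonpos (by linarith : ti - tj' ≤ 0)] using this
  have e3 : |Real.log zi' - Real.log zj| ≤ ε * (tj - ti') := by
    have := hpair _ _ hmi' hmj
    simpa [abs_of_nonpos (by linarith : ti' - tj ≤ 0)] using this
  have e4 : |Real.log zi' - Real.log zj'| ≤ ε * (tj' - ti') := by
    have := hpair _ _ hmi' hmj'
    simpa [abs_of_nonpos (by linarith : ti' - tj' ≤ 0)] using this
  rw [hza, hzb, Real.log_exp, Real.log_exp]
  rw [abs_of_nonpos (by linarith : ta - tb ≤ 0)]
  rw [abs_le] at e1 e2 e3 e4 ⊢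
  obtain ⟨e1l, e1r⟩ := e1
  obtain ⟨e2l, e2r⟩ := e2
  obtain ⟨e3l, e3r⟩ := e3
  obtain ⟨e4l, e4r⟩ := e4
  constructor
  · nlinarith [mul_nonneg hLa0 hLb0, mul_nonneg hLa0 (by linarith : (0:ℝ) ≤ 1 - Lb),
      mul_nonneg (by linarith : (0:ℝ) ≤ 1 - La) hLb0,
      mul_nonneg (by linarith : (0:ℝ) ≤ 1 - La) (by linarith : (0:ℝ) ≤ 1 - Lb),
      mul_le_mul_of_nonneg_left e1r (mul_nonneg hLa0 hLb0),
      mul_le_mul_of_nonneg_left e2r (mul_nonneg hLa0 (by linarith : (0:ℝ) ≤ 1 - Lb)),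
      mul_le_mul_of_nonneg_left e3r (mul_nonneg (by linarith : (0:ℝ) ≤ 1 - La) hLb0),
      mul_le_mul_of_nonneg_left e4r (mul_nonneg (by linarith : (0:ℝ) ≤ 1 - La) (by linarith : (0:ℝ) ≤ 1 - Lb)),
      mul_le_mul_of_nonneg_left e1l (mul_nonneg hLa0 hLb0),
      mul_le_mul_of_nonneg_left e2l (mul_nonneg hLa0 (by linarith : (0:ℝ) ≤ 1 - Lb)),
      mul_le_mul_of_nonneg_left e3l (mul_nonneg (by linarith : (0:ℝ) ≤ 1 - La) hLb0),
      mul_le_mul_of_nonneg_left e4l (mul_nonneg (by linarith : (0:ℝ) ≤ 1 - La) (by linarith : (0:ℝ) ≤ 1 - Lb)),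
      hconva, hconvb]
  · nlinarith [mul_nonneg hLa0 hLb0, mul_nonneg hLa0 (by linarith : (0:ℝ) ≤ 1 - Lb),
      mul_nonneg (by linarith : (0:ℝ) ≤ 1 - La) hLb0,
      mul_nonneg (by linarith : (0:ℝ) ≤ 1 - La) (by linarith : (0:ℝ) ≤ 1 - Lb),
      mul_le_mul_of_nonneg_left e1r (mul_nonneg hLa0 hLb0),
      mul_le_mul_of_nonneg_left e2r (mul_nonneg hLa0 (by linarith : (0:ℝ) ≤ 1 - Lb)),
      mul_le_mul_of_nonneg_left e3r (mul_nonneg (by linarith : (0:ℝ) ≤ 1 - La) hLb0),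
      mul_le_mul_of_nonneg_left e4r (mul_nonneg (by linarith : (0:ℝ) ≤ 1 - La) (by linarith : (0:ℝ) ≤ 1 - Lb)),
      mul_le_mul_of_nonneg_left e1l (mul_nonneg hLa0 hLb0),
      mul_le_mul_of_nonneg_left e2l (mul_nonneg hLa0 (by linarith : (0:ℝ) ≤ 1 - Lb)),
      mul_le_mul_of_nonneg_left e3l (mul_nonneg (by linarith : (0:ℝ) ≤ 1 - La) hLb0),
      mul_le_mul_of_nonneg_left e4l (mul_nonneg (by linarith : (0:ℝ) ≤ 1 - La) (by linarith : (0:ℝ) ≤ 1 - Lb)),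
      hconva, hconvb]
end

section
/- Let N be a positive natural number, let p > 1 be a real number, let ε ≥ 0, let Y be a finite nonempty type, and let z : (Fin N → ℝ) → Y → ℝ be a mechanism with z(x)(y) > 0 and Σ_{y ∈ Y} z(x)(y) = 1 for every x. Suppose: (i) for every coordinate ℓ, every pair x, x' ∈ ℝ^N differing only in the ℓ-th coordinate, and every y ∈ Y, z(x)(y) ≤ exp(ε_ℓ·|x_ℓ − x'_ℓ|)·z(x')(y); and (ii) Σ_{ℓ=1}^N ε_ℓ^{p/(p−1)} ≤ ε^{p/(p−1)} with all ε_ℓ ≥ 0. Then for all x, x' ∈ ℝ^N and all y ∈ Y, z(x)(y) ≤ exp(ε·(Σ_{ℓ=1}^N |x_ℓ − x'_ℓ|^p)^{1/p})·z(x')(y). -/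
/-- Dimension-wise composition for mDP (Corollary 1). -/
theorem dimensionwise_composition_mDP
    (N : ℕ) (hN : 0 < N) (p ε : ℝ) (hp : 1 < p) (hε : 0 ≤ ε)
    (Y : Type*) [Fintype Y] [Nonempty Y]
    (z : (Fin N → ℝ) → Y → ℝ)
    (hpos : ∀ x y, 0 < z x y)
    (hnorm : ∀ x, ∑ y, z x y = 1)
    (eps : Fin N → ℝ) (heps : ∀ ℓ, 0 ≤ eps ℓ)
    (hcoord : ∀ (ℓ : Fin N) (x x' : Fin N → ℝ),
      (∀ q, q ≠ ℓ → x q = x' q) →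
      ∀ y, z x y ≤ Real.exp (eps ℓ * |x ℓ - x' ℓ|) * z x' y)
    (hbudget : ∑ ℓ, eps ℓ ^ (p / (p - 1)) ≤ ε ^ (p / (p - 1)))
    (x x' : Fin N → ℝ) (y : Y) :
    z x y ≤ Real.exp (ε * (∑ ℓ, |x ℓ - x' ℓ| ^ p) ^ (1 / p)) * z x' y := by
  set q : ℝ := p / (p - 1) with hq
  have hpq : p.HolderConjugate q := Real.HolderConjugate.conjExponent hp
  -- Step 1: chain through hybrid points
  set w : ℕ → (Fin N → ℝ) := fun i ℓ => if (ℓ : ℕ) < i then x' ℓ else x ℓ with hw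
  have key : ∀ i ≤ N, z x y ≤
      Real.exp (∑ ℓ ∈ Finset.univ.filter (fun ℓ : Fin N => (ℓ : ℕ) < i),
        eps ℓ * |x ℓ - x' ℓ|) * z (w i) y := by
    intro i hi
    induction i with
    | zero =>
        simp only [Nat.not_lt_zero, Finset.filter_false, Finset.sum_empty, Real.exp_zero,
          one_mul]
        have : w 0 = x := by funext ℓ; simp [hw]
        rw [this]
    | succ i ih =>
        have hiN : i < N := hi
        have h1 := ih (Nat.le_of_lt hiN)
        set ℓ₀ : Fin N := ⟨i, hiN⟩ with hℓ₀
        have hdiff : ∀ r : Fin N, r ≠ ℓ₀ → w i r = w (i+1) r := by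
          intro r hr
          have : (r : ℕ) ≠ i := by
            intro h; exact hr (Fin.ext h)
          simp only [hw]
          rcases Nat.lt_or_ge (r : ℕ) i with h | h
          · simp [h, Nat.lt_succ_of_lt h]
          · have h' : ¬ (r : ℕ) < i := Nat.not_lt.mpr h
            have h'' : ¬ (r : ℕ) < i + 1 := by omega
            simp [h', h'']
        have h2 := hcoord ℓ₀ (w i) (w (i+1)) hdiff y
        have hw1 : w i ℓ₀ = x ℓ₀ := by simp [hw, hℓ₀]
        have hw2 : w (i+1) ℓ₀ = x' ℓ₀ := by simp [hw, hℓ₀]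
        rw [hw1, hw2] at h2
        calc z x y ≤ _ * z (w i) y := h1
          _ ≤ Real.exp (∑ ℓ ∈ Finset.univ.filter (fun ℓ : Fin N => (ℓ : ℕ) < i),
                eps ℓ * |x ℓ - x' ℓ|) *
              (Real.exp (eps ℓ₀ * |x ℓ₀ - x' ℓ₀|) * z (w (i+1)) y) := by
                apply mul_le_mul_of_nonneg_left h2 (Real.exp_pos _).le
          _ = _ := by
              rw [← mul_assoc, ← Real.exp_add]
              congr 2
              have hset : Finset.univ.filter (fun ℓ : Fin N => (ℓ : ℕ) < i + 1)
                  = insert ℓ₀ (Finset.univ.filter (fun ℓ : Fin N => (ℓ : ℕ) < i)) := by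
                ext r
                simp only [Finset.mem_filter, Finset.mem_univ, true_and, Finset.mem_insert]
                constructor
                · intro h
                  rcases Nat.lt_or_ge (r : ℕ) i with h' | h'
                  · exact Or.inr h'
                  · have hri : (r : ℕ) = i := by omega
                    exact Or.inl (Fin.ext (by simp [hℓ₀, hri]))
                · rintro (rfl | h)
                  · exact Nat.lt_succ_self i
                  · omega
              rw [hset, Finset.sum_insert (by simp [hℓ₀])]
              ring
  have hfinal := key N le_rfl
  have hwN : w N = x' := by funext ℓ; simp [hw, ℓ.isLt]
  have hfilter : Finset.univ.filter (fun ℓ : Fin N => (ℓ : ℕ) < N) = Finset.univ := by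
    ext r; simp [r.isLt]
  rw [hwN, hfilter] at hfinal
  -- Step 2: Hölder
  have habs : ∀ ℓ : Fin N, (0:ℝ) ≤ |x ℓ - x' ℓ| := fun ℓ => abs_nonneg _
  have holder : ∑ ℓ, eps ℓ * |x ℓ - x' ℓ| ≤
      (∑ ℓ, eps ℓ ^ q) ^ (1/q) * (∑ ℓ, |x ℓ - x' ℓ| ^ p) ^ (1/p) := by
    have := Real.inner_le_Lp_mul_Lq_of_nonneg (s := Finset.univ) (f := eps)
      (g := fun ℓ => |x ℓ - x' ℓ|) hpq.symm (fun i _ => heps i) (fun i _ => habs i)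
    simpa [mul_comm] using this
  have hq0 : 0 < q := hpq.symm.pos
  have hsum_nonneg : (0:ℝ) ≤ ∑ ℓ, eps ℓ ^ q :=
    Finset.sum_nonneg fun i _ => Real.rpow_nonneg (heps i) q
  have hroot : (∑ ℓ, eps ℓ ^ q) ^ (1/q) ≤ ε := by
    have h1 : (∑ ℓ, eps ℓ ^ q) ^ (1/q) ≤ (ε ^ q) ^ (1/q) :=
      Real.rpow_le_rpow hsum_nonneg hbudget (by positivity)
    calc (∑ ℓ, eps ℓ ^ q) ^ (1/q) ≤ (ε ^ q) ^ (1/q) := h1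
      _ = ε := by
          rw [one_div, Real.rpow_rpow_inv hε hq0.ne']
  -- Step 3: combine
  have hΔp : (0:ℝ) ≤ (∑ ℓ, |x ℓ - x' ℓ| ^ p) ^ (1/p) :=
    Real.rpow_nonneg (Finset.sum_nonneg fun i _ => Real.rpow_nonneg (habs i) p) _
  have hexp : ∑ ℓ, eps ℓ * |x ℓ - x' ℓ| ≤ ε * (∑ ℓ, |x ℓ - x' ℓ| ^ p) ^ (1/p) :=
    holder.trans (mul_le_mul_of_nonneg_right hroot hΔp)
  calc z x y ≤ Real.exp (∑ ℓ, eps ℓ * |x ℓ - x' ℓ|) * z x' y := hfinal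
    _ ≤ Real.exp (ε * (∑ ℓ, |x ℓ - x' ℓ| ^ p) ^ (1/p)) * z x' y :=
        mul_le_mul_of_nonneg_right (Real.exp_le_exp.mpr hexp) (hpos x' y).le
end

section
/- Let N be a positive natural number, fix a coordinate ℓ, and let ε_1, …, ε_N ≥ 0. Let x_a, x_b, x_i, x_i', x_j, x_j' ∈ ℝ^N satisfy: x_a agrees with x_i and with x_i' in every coordinate except possibly ℓ; x_b agrees with x_j and with x_j' in every coordinate except possibly ℓ; x_{a,ℓ} = x_{b,ℓ}, x_{i,ℓ} = x_{j,ℓ}, and x_{i',ℓ} = x_{j',ℓ}. Let λ ∈ [0, 1] with x_{a,ℓ} = λ·x_{i,ℓ} + (1 − λ)·x_{i',ℓ}. Suppose positive values z(x_i), z(x_i'), z(x_j), z(x_j') satisfy the dimension-wise bounds |ln z(x_i) − ln z(x_j)| ≤ Σ_{q=1}^N ε_q·|x_{i,q} − x_{j,q}| and |ln z(x_i') − ln z(x_j')| ≤ Σ_{q=1}^N ε_q·|x_{i',q} − x_{j',q}|, and define ln z(x_a) = λ·ln z(x_i) + (1 − λ)·ln z(x_i') and ln z(x_b) = λ·ln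 z(x_j) + (1 − λ)·ln z(x_j'). Then |ln z(x_a) − ln z(x_b)| ≤ Σ_{q=1}^N ε_q·|x_{a,q} − x_{b,q}|. -/
/-- Six-points lemma: log-convex interpolation with a common coefficient along
coordinate ℓ preserves the dimension-wise Lipschitz bound (Appendix Lemma). -/
theorem six_points_DW_preservation
    (N : ℕ) (hN : 0 < N) (ℓ : Fin N) (eps : Fin N → ℝ)
    (heps : ∀ q, 0 ≤ eps q)
    (xa xb xi xi' xj xj' : Fin N → ℝ)
    (hai : ∀ q, q ≠ ℓ → xa q = xi q) (hai' : ∀ q, q ≠ ℓ → xa q = xi' q)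
    (hbj : ∀ q, q ≠ ℓ → xb q = xj q) (hbj' : ∀ q, q ≠ ℓ → xb q = xj' q)
    (hab : xa ℓ = xb ℓ) (hij : xi ℓ = xj ℓ) (hij' : xi' ℓ = xj' ℓ)
    (lam : ℝ) (hlam0 : 0 ≤ lam) (hlam1 : lam ≤ 1)
    (hconv : xa ℓ = lam * xi ℓ + (1 - lam) * xi' ℓ)
    (zi zi' zj zj' : ℝ)
    (hzi : 0 < zi) (hzi' : 0 < zi') (hzj : 0 < zj) (hzj' : 0 < zj')
    (hDW1 : |Real.log zi - Real.log zj| ≤ ∑ q, eps q * |xi q - xj q|)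
    (hDW2 : |Real.log zi' - Real.log zj'| ≤ ∑ q, eps q * |xi' q - xj' q|)
    (lza lzb : ℝ)
    (hlza : lza = lam * Real.log zi + (1 - lam) * Real.log zi')
    (hlzb : lzb = lam * Real.log zj + (1 - lam) * Real.log zj') :
    |lza - lzb| ≤ ∑ q, eps q * |xa q - xb q| := by
  have key : lza - lzb = lam * (Real.log zi - Real.log zj)
      + (1 - lam) * (Real.log zi' - Real.log zj') := by
    rw [hlza, hlzb]; ring
  have h1 : |lza - lzb| ≤ lam * |Real.log zi - Real.log zj|
      + (1 - lam) * |Real.log zi' - Real.log zj'| := by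
    rw [key]
    calc _ ≤ |lam * (Real.log zi - Real.log zj)|
        + |(1 - lam) * (Real.log zi' - Real.log zj')| := abs_add_le _ _
      _ = _ := by
        rw [abs_mul, abs_mul, abs_of_nonneg hlam0,
          abs_of_nonneg (show (0:ℝ) ≤ 1 - lam by linarith)]
  have h2 : lam * |Real.log zi - Real.log zj|
      + (1 - lam) * |Real.log zi' - Real.log zj'|
      ≤ lam * (∑ q, eps q * |xi q - xj q|)
      + (1 - lam) * (∑ q, eps q * |xi' q - xj' q|) := by
    gcongr <;> linarith
  refine h1.trans (h2.trans (le_of_eq ?_))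
  rw [Finset.mul_sum, Finset.mul_sum, ← Finset.sum_add_distrib]
  refine Finset.sum_congr rfl fun q _ => ?_
  by_cases hq : q = ℓ
  · subst hq
    simp [hij, hij', hab]
  · rw [← hai q hq, ← hai' q hq, ← hbj q hq, ← hbj' q hq]
    ring
end

section
/- Let N be a positive natural number, let x̂ ∈ ℝ^N, Δ_1, …, Δ_N > 0, and let z : ({0,1}^N) → ℝ be positive anchor values on the corners of the cell C = Π_ℓ [x̂_ℓ, x̂_ℓ + Δ_ℓ]. Suppose that for every coordinate ℓ and every pair γ, γ' ∈ {0,1}^N that differ only in their ℓ-th entry, |ln z(γ) − ln z(γ')| ≤ ε_ℓ·Δ_ℓ, where ε_1, …, ε_N ≥ 0. Define the interpolant ln F(x) = Σ_{γ ∈ {0,1}^N} w(γ, x)·ln z(γ) with weights w(γ, x) = Π_ℓ ((1−γ_ℓ)λ_ℓ(x) + γ_ℓ(1−λ_ℓ(x))) and λ_ℓ(x) = (x̂_ℓ + Δ_ℓ − x_ℓ)/Δ_ℓ. Then for any x_a, x_b ∈ C that differ only in coordinate ℓ, |ln F(x_a) − ln F(x_b)| ≤ ε_ℓ·|x_{a,ℓ}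 − x_{b,ℓ}|. -/
/-- Single-coordinate Lipschitz step for the multi-dimensional log-convex
interpolant (key step in the proof of Theorem 2). -/
theorem multidim_interpolant_coordinate_lipschitz
    (N : ℕ) (hN : 0 < N) (xhat Δ : Fin N → ℝ) (hΔ : ∀ ℓ, 0 < Δ ℓ)
    (eps : Fin N → ℝ) (heps : ∀ ℓ, 0 ≤ eps ℓ)
    (z : (Fin N → Bool) → ℝ) (hz : ∀ γ, 0 < z γ)
    (hanchor : ∀ (ℓ : Fin N) (γ γ' : Fin N → Bool),
      (∀ q, q ≠ ℓ → γ q = γ' q) → γ ℓ ≠ γ' ℓ →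
      |Real.log (z γ) - Real.log (z γ')| ≤ eps ℓ * Δ ℓ)
    (lam : Fin N → (Fin N → ℝ) → ℝ)
    (hlam : ∀ ℓ x, lam ℓ x = (xhat ℓ + Δ ℓ - x ℓ) / Δ ℓ)
    (w : (Fin N → Bool) → (Fin N → ℝ) → ℝ)
    (hw : ∀ γ x, w γ x = ∏ ℓ,
      ((1 - (if γ ℓ then (1 : ℝ) else 0)) * lam ℓ x +
        (if γ ℓ then (1 : ℝ) else 0) * (1 - lam ℓ x)))
    (lnF : (Fin N → ℝ) → ℝ)
    (hlnF : ∀ x, lnF x = ∑ γ, w γ x * Real.log (z γ))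
    (ℓ : Fin N) (xa xb : Fin N → ℝ)
    (hxaC : ∀ q, xa q ∈ Set.Icc (xhat q) (xhat q + Δ q))
    (hxbC : ∀ q, xb q ∈ Set.Icc (xhat q) (xhat q + Δ q))
    (hdiff : ∀ q, q ≠ ℓ → xa q = xb q) :
    |lnF xa - lnF xb| ≤ eps ℓ * |xa ℓ - xb ℓ| := by
  have hΔℓ := hΔ ℓ
  set g : Fin N → Bool → ℝ := fun q b => if b then 1 - lam q xa else lam q xa with hg
  have hlamab : ∀ q, q ≠ ℓ → lam q xa = lam q xb := by
    intro q hq; rw [hlam, hlam, hdiff q hq]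
  have hw' : ∀ γ (x : Fin N → ℝ),
      w γ x = ∏ q, (if γ q then 1 - lam q x else lam q x) := by
    intro γ x; rw [hw]; refine Finset.prod_congr rfl fun q _ => ?_
    by_cases h : γ q <;> simp [h]
  have hlam01 : ∀ q, 0 ≤ lam q xa ∧ lam q xa ≤ 1 := by
    intro q
    have h := hxaC q
    rw [hlam]
    constructor
    · apply div_nonneg
      · linarith [h.2]
      · exact (hΔ q).le
    · rw [div_le_one (hΔ q)]; linarith [h.1]
  have hgnn : ∀ q b, 0 ≤ g q b := by
    intro q b; obtain ⟨h0, h1⟩ := hlam01 q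
    cases b <;> simp [hg] <;> linarith
  set P : (Fin N → Bool) → ℝ := fun γ => ∏ q ∈ Finset.univ.erase ℓ, g q (γ q) with hP
  have hPnn : ∀ γ, 0 ≤ P γ := fun γ => Finset.prod_nonneg fun q _ => hgnn q _
  set d : ℝ := lam ℓ xa - lam ℓ xb with hd
  have key : lnF xa - lnF xb
      = d * ∑ γ, ((if γ ℓ then (-1 : ℝ) else 1) * P γ * Real.log (z γ)) := by
    rw [hlnF, hlnF, ← Finset.sum_sub_distrib, Finset.mul_sum]
    refine Finset.sum_congr rfl fun γ _ => ?_
    rw [hw', hw',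
        ← Finset.mul_prod_erase Finset.univ _ (Finset.mem_univ ℓ),
        ← Finset.mul_prod_erase Finset.univ _ (Finset.mem_univ ℓ)]
    have h1 : ∏ q ∈ Finset.univ.erase ℓ, (if γ q then 1 - lam q xb else lam q xb)
        = P γ := by
      refine Finset.prod_congr rfl fun q hq => ?_
      rw [← hlamab q (Finset.ne_of_mem_erase hq)]
    have h2 : ∏ q ∈ Finset.univ.erase ℓ, (if γ q then 1 - lam q xa else lam q xa)
        = P γ := rfl
    rw [h1, h2]
    cases hγ : γ ℓ <;> simp [hγ, hd] <;> try ring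
  set e := Equiv.piSplitAt ℓ (fun _ : Fin N => Bool) with he
  have hsymmℓ : ∀ (b : Bool) (r : {q : Fin N // q ≠ ℓ} → Bool), e.symm (b, r) ℓ = b := by
    intro b r; simp [he]
  have hsymmoff : ∀ (b : Bool) (r : {q : Fin N // q ≠ ℓ} → Bool) (q : Fin N) (hq : q ≠ ℓ),
      e.symm (b, r) q = r ⟨q, hq⟩ := by
    intro b r q hq; simp [he, hq]
  have hPeq : ∀ (r : {q : Fin N // q ≠ ℓ} → Bool),
      P (e.symm (true, r)) = P (e.symm (false, r)) := by
    intro r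
    refine Finset.prod_congr rfl fun q hq => ?_
    have hq' := Finset.ne_of_mem_erase hq
    rw [hsymmoff true r q hq', hsymmoff false r q hq']
  have hsplit : ∑ γ, ((if γ ℓ then (-1 : ℝ) else 1) * P γ * Real.log (z γ))
      = ∑ r : {q : Fin N // q ≠ ℓ} → Bool,
          P (e.symm (false, r)) *
            (Real.log (z (e.symm (false, r))) - Real.log (z (e.symm (true, r)))) := by
    rw [← Equiv.sum_comp e.symm, Fintype.sum_prod_type, Fintype.sum_bool,
        ← Finset.sum_add_distrib]
    refine Finset.sum_congr rfl fun r _ => ?_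
    rw [hsymmℓ true r, hsymmℓ false r, hPeq r]
    simp; ring
  have hanch : ∀ r : {q : Fin N // q ≠ ℓ} → Bool,
      |Real.log (z (e.symm (false, r))) - Real.log (z (e.symm (true, r)))| ≤
        eps ℓ * Δ ℓ := by
    intro r
    refine hanchor ℓ _ _ (fun q hq => ?_) ?_
    · rw [hsymmoff false r q hq, hsymmoff true r q hq]
    · rw [hsymmℓ false r, hsymmℓ true r]; simp
  have hPsum : ∑ r : {q : Fin N // q ≠ ℓ} → Bool, P (e.symm (false, r)) = 1 := by
    have h1 : ∀ r : {q : Fin N // q ≠ ℓ} → Bool,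
        P (e.symm (false, r)) = ∏ q : {q : Fin N // q ≠ ℓ}, g q.1 (r q) := by
      intro r
      show ∏ q ∈ Finset.univ.erase ℓ, g q (e.symm (false, r) q) = _
      rw [Finset.prod_subtype (p := fun q => q ≠ ℓ) (Finset.univ.erase ℓ)
        (fun q => by simp) (fun q => g q (e.symm (false, r) q))]
      refine Finset.prod_congr rfl fun q _ => ?_
      rw [hsymmoff false r q.1 q.2]
    simp only [h1]
    have h2 : ∀ q : {q : Fin N // q ≠ ℓ}, ∑ b : Bool, g q.1 b = 1 := by
      intro q; rw [Fintype.sum_bool]; simp [hg]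
    calc ∑ r : {q : Fin N // q ≠ ℓ} → Bool, ∏ q, g q.1 (r q)
        = ∏ q : {q : Fin N // q ≠ ℓ}, ∑ b : Bool, g q.1 b := by
          rw [Finset.prod_univ_sum]
          rw [Fintype.piFinset_univ]
      _ = 1 := by
          refine Finset.prod_eq_one fun q _ => ?_
          exact h2 q
  have hS : |∑ r : {q : Fin N // q ≠ ℓ} → Bool,
      P (e.symm (false, r)) *
        (Real.log (z (e.symm (false, r))) - Real.log (z (e.symm (true, r))))| ≤
      eps ℓ * Δ ℓ := by
    calc |∑ r : {q : Fin N // q ≠ ℓ} → Bool, P (e.symm (false, r)) *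
          (Real.log (z (e.symm (false, r))) - Real.log (z (e.symm (true, r))))|
        ≤ ∑ r : {q : Fin N // q ≠ ℓ} → Bool, |P (e.symm (false, r)) *
          (Real.log (z (e.symm (false, r))) - Real.log (z (e.symm (true, r))))| :=
          Finset.abs_sum_le_sum_abs _ _
      _ ≤ ∑ r : {q : Fin N // q ≠ ℓ} → Bool, P (e.symm (false, r)) * (eps ℓ * Δ ℓ) := by
          refine Finset.sum_le_sum fun r _ => ?_
          rw [abs_mul, abs_of_nonneg (hPnn _)]
          exact mul_le_mul_of_nonneg_left (hanch r) (hPnn _)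
      _ = eps ℓ * Δ ℓ := by rw [← Finset.sum_mul, hPsum, one_mul]
  have hdval : d = (xb ℓ - xa ℓ) / Δ ℓ := by
    rw [hd, hlam, hlam]; field_simp; ring
  have habsd : |d| = |xa ℓ - xb ℓ| / Δ ℓ := by
    rw [hdval, abs_div, abs_of_pos hΔℓ, abs_sub_comm]
  calc |lnF xa - lnF xb|
      = |d| * |∑ r : {q : Fin N // q ≠ ℓ} → Bool, P (e.symm (false, r)) *
          (Real.log (z (e.symm (false, r))) - Real.log (z (e.symm (true, r))))| := by
        rw [key, hsplit, abs_mul]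
    _ ≤ |d| * (eps ℓ * Δ ℓ) := mul_le_mul_of_nonneg_left hS (abs_nonneg d)
    _ = eps ℓ * |xa ℓ - xb ℓ| := by
        rw [habsd]; field_simp
end

section
/- Let N be a positive natural number, let p > 1 be a real number, let ε, ε_1, …, ε_N ≥ 0 with Σ_{ℓ=1}^N ε_ℓ^{p/(p−1)} ≤ ε^{p/(p−1)}. Let x̂ ∈ ℝ^N, Δ_1, …, Δ_N > 0, and let z : ({0,1}^N) → ℝ be positive anchor values on the corners of the cell C = Π_ℓ [x̂_ℓ, x̂_ℓ + Δ_ℓ] such that for every coordinate ℓ and every pair γ, γ' ∈ {0,1}^N differing only in their ℓ-th entry, |ln z(γ) − ln z(γ')| ≤ ε_ℓ·Δ_ℓ. Define ln F(x) = Σ_{γ ∈ {0,1}^N} w(γ, x)·ln z(γ) with weights w(γ, x) = Π_ℓ ((1−γ_ℓ)λ_ℓ(x) + γ_ℓ(1−λ_ℓ(x))) and λ_ℓ(x) = (x̂_ℓ + Δ_ℓ − x_ℓ)/Δ_ℓ. Then for all x_a, x_b ∈ C, |ln F(x_a) − ln F(x_b)| ≤ ε·(Σ_{ℓ=1}^N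 |x_{a,ℓ} − x_{b,ℓ}|^p)^{1/p}. -/
/-- Single-coordinate Lipschitz bound for the log-interpolant. -/
lemma coord_lip
    (N : ℕ)
    (epsl : ℝ)
    (xhat Δ : Fin N → ℝ) (hΔ : ∀ ℓ, 0 < Δ ℓ)
    (z : (Fin N → Bool) → ℝ)
    (lam : Fin N → (Fin N → ℝ) → ℝ)
    (hlam : ∀ ℓ x, lam ℓ x = (xhat ℓ + Δ ℓ - x ℓ) / Δ ℓ)
    (w : (Fin N → Bool) → (Fin N → ℝ) → ℝ)
    (hw : ∀ γ x, w γ x = ∏ ℓ,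
      ((1 - (if γ ℓ then (1 : ℝ) else 0)) * lam ℓ x +
        (if γ ℓ then (1 : ℝ) else 0) * (1 - lam ℓ x)))
    (lnF : (Fin N → ℝ) → ℝ)
    (hlnF : ∀ x, lnF x = ∑ γ, w γ x * Real.log (z γ))
    (ℓ : Fin N)
    (hanchorℓ : ∀ (γ γ' : Fin N → Bool),
      (∀ q, q ≠ ℓ → γ q = γ' q) → γ ℓ ≠ γ' ℓ →
      |Real.log (z γ) - Real.log (z γ')| ≤ epsl * Δ ℓ)
    (x : Fin N → ℝ)
    (hx : ∀ q, x q ∈ Set.Icc (xhat q) (xhat q + Δ q))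
    (t : ℝ) :
    |lnF x - lnF (Function.update x ℓ t)| ≤ epsl * |x ℓ - t| := by
  set y : Fin N → ℝ := Function.update x ℓ t with hy
  -- one-coordinate factors
  set c : Fin N → Bool → ℝ := fun q b => if b then 1 - lam q x else lam q x with hc
  set cy : Fin N → Bool → ℝ := fun q b => if b then 1 - lam q y else lam q y with hcy
  have hwx : ∀ γ, w γ x = ∏ q, c q (γ q) := by
    intro γ
    rw [hw]
    refine Finset.prod_congr rfl fun q _ => ?_
    cases h : γ q <;> simp [hc, h]
  have hwy : ∀ γ, w γ y = ∏ q, cy q (γ q) := by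
    intro γ
    rw [hw]
    refine Finset.prod_congr rfl fun q _ => ?_
    cases h : γ q <;> simp [hcy, h]
  have hyq : ∀ q, q ≠ ℓ → y q = x q := fun q hq => Function.update_of_ne hq _ _
  have hcq : ∀ q, q ≠ ℓ → ∀ b, cy q b = c q b := by
    intro q hq b
    simp only [hc, hcy, hlam, hyq q hq]
  -- bounds on c
  have hc01 : ∀ q b, 0 ≤ c q b := by
    intro q b
    have h1 := (hx q).1
    have h2 := (hx q).2
    have hlam01 : 0 ≤ lam q x ∧ lam q x ≤ 1 := by
      rw [hlam]
      constructor
      · apply div_nonneg _ (hΔ q).le; linarith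
      · rw [div_le_one (hΔ q)]; linarith
    cases b <;> simp [hc] <;> linarith [hlam01.1, hlam01.2]
  -- P γ : product over q ≠ ℓ
  set P : (Fin N → Bool) → ℝ := fun γ => ∏ q ∈ Finset.univ.erase ℓ, c q (γ q) with hP
  have hPnn : ∀ γ, 0 ≤ P γ := fun γ => Finset.prod_nonneg fun q _ => hc01 q (γ q)
  set d : ℝ := lam ℓ x - lam ℓ y with hd
  -- difference of weights
  have hwdiff : ∀ γ, w γ x - w γ y = ((if γ ℓ then (-1:ℝ) else 1) * d) * P γ := by
    intro γ
    rw [hwx, hwy]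
    rw [← Finset.mul_prod_erase Finset.univ (fun q => c q (γ q)) (Finset.mem_univ ℓ),
        ← Finset.mul_prod_erase Finset.univ (fun q => cy q (γ q)) (Finset.mem_univ ℓ)]
    have : ∏ q ∈ Finset.univ.erase ℓ, cy q (γ q) = P γ := by
      refine Finset.prod_congr rfl fun q hq => ?_
      exact hcq q (Finset.ne_of_mem_erase hq) _
    rw [this]
    have hcl : c ℓ (γ ℓ) - cy ℓ (γ ℓ) = (if γ ℓ then (-1:ℝ) else 1) * d := by
      cases h : γ ℓ <;> simp [hc, hcy, hd] <;> ring
    calc c ℓ (γ ℓ) * P γ - cy ℓ (γ ℓ) * P γ = (c ℓ (γ ℓ) - cy ℓ (γ ℓ)) * P γ := by ring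
      _ = ((if γ ℓ then (-1:ℝ) else 1) * d) * P γ := by rw [hcl]
  -- the signed sum
  have hdiff : lnF x - lnF y =
      d * ∑ γ, (if γ ℓ then (-1:ℝ) else 1) * (P γ * Real.log (z γ)) := by
    rw [hlnF, hlnF, ← Finset.sum_sub_distrib, Finset.mul_sum]
    refine Finset.sum_congr rfl fun γ _ => ?_
    have : w γ x * Real.log (z γ) - w γ y * Real.log (z γ)
        = (w γ x - w γ y) * Real.log (z γ) := by ring
    rw [this, hwdiff γ]
    ring
  -- pairing argument
  set u : (Fin N → Bool) → (Fin N → Bool) := fun γ => Function.update γ ℓ (!γ ℓ) with hu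
  have huℓ : ∀ γ, u γ ℓ = !γ ℓ := fun γ => Function.update_self ℓ _ γ
  have huq : ∀ γ q, q ≠ ℓ → u γ q = γ q := fun γ q hq => Function.update_of_ne hq _ _
  have huinv : Function.Involutive u := by
    intro γ
    funext q
    by_cases hq : q = ℓ
    · subst hq; simp [hu]
    · simp [hu, Function.update_of_ne hq]
  have hPu : ∀ γ, P (u γ) = P γ := by
    intro γ
    refine Finset.prod_congr rfl fun q hq => ?_
    rw [huq γ q (Finset.ne_of_mem_erase hq)]
  have hSsplit : ∀ γ, (if γ ℓ then (-1:ℝ) else 1) * (P γ * Real.log (z γ))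
      = (if γ ℓ = false then P γ * Real.log (z γ) else 0)
        - (if γ ℓ = true then P γ * Real.log (z γ) else 0) := by
    intro γ; cases h : γ ℓ <;> simp [h]
  have hreindex : ∑ γ, (if γ ℓ = true then P γ * Real.log (z γ) else 0)
      = ∑ γ, (if γ ℓ = false then P γ * Real.log (z (u γ)) else 0) := by
    rw [← Function.Bijective.sum_comp huinv.bijective
      (fun γ => if γ ℓ = true then P γ * Real.log (z γ) else 0)]
    refine Finset.sum_congr rfl fun γ _ => ?_
    cases h : γ ℓ
    · simp [huℓ, h, hPu]
    · simp [huℓ, h]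
  have hS : ∑ γ, (if γ ℓ then (-1:ℝ) else 1) * (P γ * Real.log (z γ))
      = ∑ γ, (if γ ℓ = false then P γ * (Real.log (z γ) - Real.log (z (u γ))) else 0) := by
    rw [Finset.sum_congr rfl fun γ _ => hSsplit γ, Finset.sum_sub_distrib, hreindex,
        ← Finset.sum_sub_distrib]
    refine Finset.sum_congr rfl fun γ _ => ?_
    by_cases h : γ ℓ = false
    · simp only [if_pos h]; ring
    · simp only [if_neg h]; ring
  -- the absolute value bound on S
  have hSbound : |∑ γ, (if γ ℓ then (-1:ℝ) else 1) * (P γ * Real.log (z γ))|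
      ≤ epsl * Δ ℓ := by
    rw [hS]
    calc |∑ γ, (if γ ℓ = false then P γ * (Real.log (z γ) - Real.log (z (u γ))) else 0)|
        ≤ ∑ γ, |if γ ℓ = false then P γ * (Real.log (z γ) - Real.log (z (u γ))) else 0| :=
          Finset.abs_sum_le_sum_abs _ _
      _ ≤ ∑ γ, (if γ ℓ = false then P γ else 0) * (epsl * Δ ℓ) := by
          refine Finset.sum_le_sum fun γ _ => ?_
          cases h : γ ℓ
          · simp only [h, if_true]
            rw [abs_mul, abs_of_nonneg (hPnn γ)]
            refine mul_le_mul_of_nonneg_left ?_ (hPnn γ)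
            refine hanchorℓ γ (u γ) (fun q hq => (huq γ q hq).symm) ?_
            rw [huℓ, h]; simp
          · simp [h]
      _ = (∑ γ, if γ ℓ = false then P γ else 0) * (epsl * Δ ℓ) := by
          rw [Finset.sum_mul]
      _ = 1 * (epsl * Δ ℓ) := by
          congr 1
          -- show the sum of the masked products is 1
          set c'' : Fin N → Bool → ℝ := fun q b =>
            if q = ℓ then (if b then 0 else 1) else c q b with hc''
          have hmask : ∀ γ, (if γ ℓ = false then P γ else 0) = ∏ q, c'' q (γ q) := by
            intro γ
            rw [← Finset.mul_prod_erase Finset.univ (fun q => c'' q (γ q))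
              (Finset.mem_univ ℓ)]
            have h2 : ∏ q ∈ Finset.univ.erase ℓ, c'' q (γ q) = P γ := by
              refine Finset.prod_congr rfl fun q hq => ?_
              simp [hc'', Finset.ne_of_mem_erase hq]
            rw [h2]
            cases h : γ ℓ <;> simp [hc'', h]
          rw [Finset.sum_congr rfl fun γ _ => hmask γ]
          have := Finset.prod_univ_sum (fun _ : Fin N => (Finset.univ : Finset Bool))
            (fun q b => c'' q b)
          rw [Fintype.piFinset_univ] at this
          rw [← this]
          refine Finset.prod_eq_one fun q _ => ?_
          by_cases hq : q = ℓ
          · subst hq; simp [hc'']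
          · simp [hc'', hq, hc]
      _ = epsl * Δ ℓ := one_mul _
  -- |d| = |x ℓ - t| / Δ ℓ
  have hdval : d = (t - x ℓ) / Δ ℓ := by
    rw [hd, hlam, hlam, hy, Function.update_self, div_sub_div_same]
    ring
  have habs : |lnF x - lnF y| ≤ |d| * (epsl * Δ ℓ) := by
    rw [hdiff, abs_mul]
    exact mul_le_mul_of_nonneg_left hSbound (abs_nonneg _)
  calc |lnF x - lnF y| ≤ |d| * (epsl * Δ ℓ) := habs
    _ = (|t - x ℓ| / Δ ℓ) * (epsl * Δ ℓ) := by
        rw [hdval, abs_div, abs_of_pos (hΔ ℓ)]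
    _ = epsl * |x ℓ - t| := by
        rw [abs_sub_comm, div_mul_eq_mul_div, mul_div_assoc,
          mul_div_cancel_right₀ _ (hΔ ℓ).ne', mul_comm]

/-- Correctness of log-convex interpolation within one cell (Theorem 2, both
records in the same cell): the interpolant satisfies the (ε, d_p)-Lipschitz
bound. -/
theorem multidim_interpolant_lp_lipschitz
    (N : ℕ) (hN : 0 < N) (p ε : ℝ) (hp : 1 < p) (hε : 0 ≤ ε)
    (eps : Fin N → ℝ) (heps : ∀ ℓ, 0 ≤ eps ℓ)
    (hbudget : ∑ ℓ, eps ℓ ^ (p / (p - 1)) ≤ ε ^ (p / (p - 1)))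
    (xhat Δ : Fin N → ℝ) (hΔ : ∀ ℓ, 0 < Δ ℓ)
    (z : (Fin N → Bool) → ℝ) (hz : ∀ γ, 0 < z γ)
    (hanchor : ∀ (ℓ : Fin N) (γ γ' : Fin N → Bool),
      (∀ q, q ≠ ℓ → γ q = γ' q) → γ ℓ ≠ γ' ℓ →
      |Real.log (z γ) - Real.log (z γ')| ≤ eps ℓ * Δ ℓ)
    (lam : Fin N → (Fin N → ℝ) → ℝ)
    (hlam : ∀ ℓ x, lam ℓ x = (xhat ℓ + Δ ℓ - x ℓ) / Δ ℓ)
    (w : (Fin N → Bool) → (Fin N → ℝ) → ℝ)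
    (hw : ∀ γ x, w γ x = ∏ ℓ,
      ((1 - (if γ ℓ then (1 : ℝ) else 0)) * lam ℓ x +
        (if γ ℓ then (1 : ℝ) else 0) * (1 - lam ℓ x)))
    (lnF : (Fin N → ℝ) → ℝ)
    (hlnF : ∀ x, lnF x = ∑ γ, w γ x * Real.log (z γ))
    (xa xb : Fin N → ℝ)
    (hxaC : ∀ q, xa q ∈ Set.Icc (xhat q) (xhat q + Δ q))
    (hxbC : ∀ q, xb q ∈ Set.Icc (xhat q) (xhat q + Δ q)) :
    |lnF xa - lnF xb| ≤ ε * (∑ ℓ, |xa ℓ - xb ℓ| ^ p) ^ (1 / p) := by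
  -- hybrid points
  set y : ℕ → (Fin N → ℝ) := fun k q => if (q : ℕ) < k then xb q else xa q with hy
  have hy0 : y 0 = xa := by funext q; simp [hy]
  have hyN : y N = xb := by funext q; simp [hy, q.isLt]
  have hyC : ∀ k q, y k q ∈ Set.Icc (xhat q) (xhat q + Δ q) := by
    intro k q
    by_cases h : (q : ℕ) < k <;> simp [hy, h] <;> [exact hxbC q; exact hxaC q]
  -- per-step Lipschitz bound
  have hstep : ∀ (k : ℕ) (hk : k < N), |lnF (y k) - lnF (y (k + 1))|
      ≤ eps ⟨k, hk⟩ * |xa ⟨k, hk⟩ - xb ⟨k, hk⟩| := by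
    intro k hk
    set ℓ : Fin N := ⟨k, hk⟩ with hℓ
    have hupdate : y (k + 1) = Function.update (y k) ℓ (xb ℓ) := by
      funext q
      by_cases hq : q = ℓ
      · subst hq; simp [hy, Function.update_self, hℓ]
      · have hqk : (q : ℕ) ≠ k := by
          intro h; apply hq; apply Fin.ext; exact h
        rw [Function.update_of_ne hq]
        simp only [hy]
        have : (q : ℕ) < k + 1 ↔ (q : ℕ) < k := by omega
        rw [if_congr this rfl rfl]
    have hykℓ : y k ℓ = xa ℓ := by simp [hy, hℓ]
    rw [hupdate]
    have := coord_lip N (eps ℓ) xhat Δ hΔ z lam hlam w hw lnF hlnF ℓ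
      (hanchor ℓ) (y k) (hyC k) (xb ℓ)
    rw [hykℓ] at this
    exact this
  -- telescoping
  have htel : |lnF xa - lnF xb| ≤ ∑ ℓ : Fin N, eps ℓ * |xa ℓ - xb ℓ| := by
    have h1 : lnF xa - lnF xb = ∑ k ∈ Finset.range N, (lnF (y k) - lnF (y (k + 1))) := by
      rw [Finset.sum_range_sub' (fun k => lnF (y k)) N, hy0, hyN]
    rw [h1]
    calc |∑ k ∈ Finset.range N, (lnF (y k) - lnF (y (k + 1)))|
        ≤ ∑ k ∈ Finset.range N, |lnF (y k) - lnF (y (k + 1))| :=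
          Finset.abs_sum_le_sum_abs _ _
      _ ≤ ∑ ℓ : Fin N, eps ℓ * |xa ℓ - xb ℓ| := by
          rw [Finset.sum_range fun k => |lnF (y k) - lnF (y (k+1))|]
          refine Finset.sum_le_sum fun i _ => ?_
          simpa using hstep i i.isLt
  -- Hölder step
  set q : ℝ := p / (p - 1) with hq
  have hpq : p.HolderConjugate q := by
    rw [hq]
    exact Real.HolderConjugate.conjExponent hp
  have hq0 : 0 < q := hpq.symm.pos
  have hholder : ∑ ℓ : Fin N, eps ℓ * |xa ℓ - xb ℓ|
      ≤ (∑ ℓ, |xa ℓ - xb ℓ| ^ p) ^ (1 / p) * (∑ ℓ, eps ℓ ^ q) ^ (1 / q) := by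
    have := Real.inner_le_Lp_mul_Lq_of_nonneg (s := Finset.univ)
      (f := fun ℓ => |xa ℓ - xb ℓ|) (g := eps) hpq
      (fun i _ => abs_nonneg _) (fun i _ => heps i)
    calc ∑ ℓ : Fin N, eps ℓ * |xa ℓ - xb ℓ|
        = ∑ ℓ : Fin N, |xa ℓ - xb ℓ| * eps ℓ := by
          refine Finset.sum_congr rfl fun ℓ _ => mul_comm _ _
      _ ≤ _ := this
  have hepsbound : (∑ ℓ, eps ℓ ^ q) ^ (1 / q) ≤ ε := by
    have h1 : (∑ ℓ, eps ℓ ^ q) ^ (1 / q) ≤ (ε ^ q) ^ (1 / q) := by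
      apply Real.rpow_le_rpow
      · exact Finset.sum_nonneg fun ℓ _ => Real.rpow_nonneg (heps ℓ) _
      · rw [hq]; exact hbudget
      · positivity
    have h2 : (ε ^ q) ^ (1 / q) = ε := by
      rw [one_div, Real.rpow_rpow_inv hε hq0.ne']
    rw [h2] at h1
    exact h1
  calc |lnF xa - lnF xb| ≤ ∑ ℓ : Fin N, eps ℓ * |xa ℓ - xb ℓ| := htel
    _ ≤ (∑ ℓ, |xa ℓ - xb ℓ| ^ p) ^ (1 / p) * (∑ ℓ, eps ℓ ^ q) ^ (1 / q) := hholder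
    _ ≤ (∑ ℓ, |xa ℓ - xb ℓ| ^ p) ^ (1 / p) * ε := by
        apply mul_le_mul_of_nonneg_left hepsbound
        apply Real.rpow_nonneg
        exact Finset.sum_nonneg fun ℓ _ => Real.rpow_nonneg (abs_nonneg _) _
    _ = ε * (∑ ℓ, |xa ℓ - xb ℓ| ^ p) ^ (1 / p) := mul_comm _ _
end

section
/- Let Y be a finite nonempty type, let c ≥ 0, and let f_a, f_b : Y → ℝ be functions with f_a(y) > 0 and f_b(y) > 0 for all y, satisfying f_a(y) ≤ e^c·f_b(y) and f_b(y) ≤ e^c·f_a(y) for every y ∈ Y. Define the normalized distributions z_a(y) = f_a(y) / Σ_{y' ∈ Y} f_a(y') and z_b(y) = f_b(y) / Σ_{y' ∈ Y} f_b(y'). Then for every y ∈ Y, z_a(y) ≤ e^{2c}·z_b(y). -/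
/-- Normalization at most doubles the effective privacy budget
(Proposition 4). -/
theorem normalization_doubles_budget
    (Y : Type*) [Fintype Y] [Nonempty Y] (c : ℝ) (hc : 0 ≤ c)
    (fa fb : Y → ℝ) (hfa : ∀ y, 0 < fa y) (hfb : ∀ y, 0 < fb y)
    (hab : ∀ y, fa y ≤ Real.exp c * fb y)
    (hba : ∀ y, fb y ≤ Real.exp c * fa y)
    (y : Y) :
    fa y / (∑ y', fa y') ≤ Real.exp (2 * c) * (fb y / (∑ y', fb y')) := by
  have hsa : (0:ℝ) < ∑ y', fa y' := Finset.sum_pos (fun i _ => hfa i) Finset.univ_nonempty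
  have hsb : (0:ℝ) < ∑ y', fb y' := Finset.sum_pos (fun i _ => hfb i) Finset.univ_nonempty
  have hec : (0:ℝ) < Real.exp c := Real.exp_pos c
  have hsum : ∑ y', fb y' ≤ Real.exp c * ∑ y', fa y' := by
    rw [Finset.mul_sum]
    exact Finset.sum_le_sum (fun i _ => hba i)
  rw [div_le_iff₀ hsa, mul_comm (Real.exp (2*c)) (fb y / _), div_mul_eq_mul_div,
    div_mul_eq_mul_div, le_div_iff₀ hsb]
  calc fa y * (∑ y', fb y') ≤ (Real.exp c * fb y) * (Real.exp c * ∑ y', fa y') :=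
        mul_le_mul (hab y) hsum hsb.le (mul_pos hec (hfb y)).le
    _ = fb y * Real.exp (2*c) * (∑ y', fa y') := by
        rw [two_mul, Real.exp_add]; ring
end
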